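/- arXiv:1909.01187 — 4 statements merged into one kernel-verified Lean document; each statement's English description precedes it below -/
import Mathlib

section
/- Let P be a set, let A_1, …, A_m be finite subsets of P, and let k be a natural number with 1 ≤ k ≤ m. Then the minimum natural number ℓ for which there exists a finite V ⊆ P with |V| ≤ ℓ covering at least k of the sets A_1, …, A_m equals the minimum, over all S ⊆ {1,…,m} with |S| = k, of |⋃_{i∈S} A_i| (the optimal value of the minimum k-union problem on A_1, …, A_m). -/
/-- **Reduction from minimum k-union.** For `1 ≤ k ≤ m`, the minimum budget `ℓ`
for which some vocabulary `V` with `|V| ≤ ℓ` covers at least `k` of the phrase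
sets `A 1, …, A m` equals the minimum, over all choices `S` of `k` of the sets,
of the cardinality of their union (the optimal value of minimum k-union). -/
theorem min_budget_eq_min_k_union {P : Type*} [DecidableEq P] (m : ℕ)
    (A : Fin m → Finset P) (k : ℕ) (hk1 : 1 ≤ k) (hk2 : k ≤ m) :
    sInf {ℓ : ℕ | ∃ V : Finset P, V.card ≤ ℓ ∧
        k ≤ (Finset.univ.filter fun i : Fin m => A i ⊆ V).card} =
    sInf {c : ℕ | ∃ S : Finset (Fin m), S.card = k ∧ (S.biUnion A).card = c} := by
  -- T2 → T1: any k-union value is an achievable budget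
  have sub : {c : ℕ | ∃ S : Finset (Fin m), S.card = k ∧ (S.biUnion A).card = c} ⊆
      {ℓ : ℕ | ∃ V : Finset P, V.card ≤ ℓ ∧
        k ≤ (Finset.univ.filter fun i : Fin m => A i ⊆ V).card} := by
    rintro c ⟨S, hScard, hc⟩
    refine ⟨S.biUnion A, le_of_eq hc, ?_⟩
    calc k = S.card := hScard.symm
      _ ≤ _ := Finset.card_le_card (by
          intro i hi
          simp only [Finset.mem_filter, Finset.mem_univ, true_and]
          exact Finset.subset_biUnion_of_mem A hi)
  -- T2 nonempty
  have hne2 : {c : ℕ | ∃ S : Finset (Fin m), S.card = k ∧ (S.biUnion A).card = c}.Nonempty := by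
    obtain ⟨S, _, hScard⟩ := Finset.exists_subset_card_eq
      (s := (Finset.univ : Finset (Fin m))) (n := k) (by simpa using hk2)
    exact ⟨(S.biUnion A).card, S, hScard, rfl⟩
  apply le_antisymm
  · exact le_csInf hne2 fun b hb => Nat.sInf_le (sub hb)
  · refine le_csInf ⟨_, sub hne2.choose_spec⟩ ?_
    rintro ℓ ⟨V, hVcard, hcov⟩
    obtain ⟨S, hSsub, hScard⟩ := Finset.exists_subset_card_eq
      (s := Finset.univ.filter fun i : Fin m => A i ⊆ V) (n := k) hcov
    have hunion : S.biUnion A ⊆ V := by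
      intro x hx
      obtain ⟨i, hi, hxi⟩ := Finset.mem_biUnion.mp hx
      exact (Finset.mem_filter.mp (hSsub hi)).2 hxi
    have h1 : sInf {c : ℕ | ∃ S : Finset (Fin m), S.card = k ∧ (S.biUnion A).card = c}
        ≤ (S.biUnion A).card := Nat.sInf_le ⟨S, hScard, rfl⟩
    exact h1.trans ((Finset.card_le_card hunion).trans hVcard)
end

section
/- Fix a token alphabet Σ, a source list s = [s_1,…,s_n] over Σ, and a phrase vocabulary V, a finite set of nonempty lists over Σ. If a target list t over Σ is realizable from s with vocabulary V, then there exist indices 1 ≤ i_1 < i_2 < ⋯ < i_r ≤ n and a decomposition t = g_0 ++ [s_{i_1}] ++ g_1 ++ [s_{i_2}] ++ ⋯ ++ [s_{i_r}] ++ g_r such that: the list [s_{i_1},…,s_{i_r}] is a common subsequence of s and t; each gap segment g_j is a concatenation of elements of V; g_0 is a concatenation of at most i_1 phrases; for each 1 ≤ j < r, g_j is a concatenation of at most i_{j+1} − i_j phrases; and g_r is a concatenation of at most n − i_r phrases (so in particular g_r is empty when i_r = n). In the case r = 0, t itself is a concatenation of at most n elements of V. -/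
/-!
Induct on the source. The tag of the first source token contributes its added phrase, which is
empty or a single phrase of the vocabulary, to the front of the target. If the token is deleted,
that phrase joins the first gap; if it is kept, the token becomes the new first kept position
with the phrase as the gap before it, and all later positions shift by one. Each source position
adds at most one phrase, which is what keeps every gap within its bound.
-/

/-- The realization of a tag sequence: for each source token `s i` tagged with
`(b i, p i)`, output the added phrase `p i` followed by `[s i]` if `b i = KEEP`
(encoded `true`) and by nothing if `b i = DELETE` (encoded `false`). -/
def realization {α : Type*} (s : List α) (tags : List (Bool × List α)) : List α :=
  (s.zip tags).flatMap fun x => x.2.2 ++ (if x.2.1 then [x.1] else [])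

/-- A target `t` is realizable from the source `s` with phrase vocabulary `V`
if some tag sequence for `s` (one tag per source token, each added phrase
empty or in `V`) realizes to `t`. -/
def Realizable {α : Type*} (V : Finset (List α)) (s t : List α) : Prop :=
  ∃ tags : List (Bool × List α), tags.length = s.length ∧
    (∀ bp ∈ tags, bp.2 = [] ∨ bp.2 ∈ V) ∧ realization s tags = t

section

variable {α : Type*}

theorem Fin.cons_mk_add_one {n : ℕ} {β : Sort*} (x : β) (p : Fin n → β) (k : ℕ)
    (h : k + 1 < n + 1) :
    (Fin.cons x p : Fin (n + 1) → β) ⟨k + 1, h⟩ = p ⟨k, Nat.lt_of_succ_lt_succ h⟩ := rfl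

theorem eq_nil_of_realizable_nil {V : Finset (List α)} {t : List α} (h : Realizable V [] t) :
    t = [] := by
  obtain ⟨tags, -, -, rfl⟩ := h
  simp [realization]

theorem Realizable.exists_of_cons {V : Finset (List α)} {a : α} {s t : List α}
    (h : Realizable V (a :: s) t) :
    ∃ (b : Bool) (p t' : List α), (p = [] ∨ p ∈ V) ∧ Realizable V s t' ∧
      t = p ++ (if b then [a] else []) ++ t' := by
  obtain ⟨_ | ⟨⟨b, p⟩, tags⟩, hlen, hmem, rfl⟩ := h
  · simp at hlen
  have htail : Realizable V s (realization s tags) :=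
    ⟨tags, by simpa using hlen, fun bp hbp => hmem bp (List.mem_cons_of_mem _ hbp), rfl⟩
  refine ⟨b, p, realization s tags, hmem _ List.mem_cons_self, htail, ?_⟩
  simp [realization]

theorem exists_flatten_eq_of_eq_nil_or_mem {V : Finset (List α)} {p : List α}
    (hp : p = [] ∨ p ∈ V) :
    ∃ ps : List (List α), (∀ q ∈ ps, q ∈ V) ∧ ps.length ≤ 1 ∧ ps.flatten = p := by
  rcases hp with rfl | hp
  · exact ⟨[], by simp⟩
  · exact ⟨[p], by simpa using hp⟩

/-- The conclusion of `realizable_common_subsequence_decomposition` as data, so that it can be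
built up one source token at a time. -/
structure GapDecomposition (V : Finset (List α)) (s t : List α) where
  r : ℕ
  idx : Fin r → Fin s.length
  gs : Fin (r + 1) → List (List α)
  strictMono_idx : StrictMono idx
  mem_vocab : ∀ j, ∀ p ∈ gs j, p ∈ V
  kept_sublist_source : (List.ofFn fun j => s.get (idx j)).Sublist s
  kept_sublist_target : (List.ofFn fun j => s.get (idx j)).Sublist t
  eq_target : t = (gs 0).flatten ++
    (List.ofFn fun j : Fin r => s.get (idx j) :: (gs j.succ).flatten).flatten
  length_gs_zero_le : (gs 0).length ≤ if h0 : 0 < r then (idx ⟨0, h0⟩).val + 1 else s.length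
  length_gs_succ_le : ∀ j : Fin r, (gs j.succ).length ≤
    if hj : j.val + 1 < r then (idx ⟨j.val + 1, hj⟩).val - (idx j).val
    else s.length - (idx j).val - 1

namespace GapDecomposition

variable {V : Finset (List α)}

def nil : GapDecomposition V [] [] where
  r := 0
  idx := Fin.elim0
  gs := fun _ => []
  strictMono_idx := fun i => i.elim0
  mem_vocab := by simp
  kept_sublist_source := by simp
  kept_sublist_target := by simp
  eq_target := by simp
  length_gs_zero_le := by simp
  length_gs_succ_le := fun j => j.elim0

variable {s t : List α} (d : GapDecomposition V s t) (a : α) {ps : List (List α)}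

def consDelete (hps : ∀ q ∈ ps, q ∈ V) (hlen : ps.length ≤ 1) :
    GapDecomposition V (a :: s) (ps.flatten ++ t) where
  r := d.r
  idx := Fin.succ ∘ d.idx
  gs := Fin.cons (ps ++ d.gs 0) (d.gs ∘ Fin.succ)
  strictMono_idx := Fin.strictMono_succ.comp d.strictMono_idx
  mem_vocab := Fin.cases (fun q hq => (List.mem_append.1 hq).elim (hps q) (d.mem_vocab 0 q))
    (fun j => d.mem_vocab j.succ)
  kept_sublist_source := by simpa using d.kept_sublist_source.cons a
  kept_sublist_target := by
    simpa using d.kept_sublist_target.trans (List.sublist_append_right _ _)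
  eq_target := by
    conv_lhs => rw [d.eq_target]
    simp
  length_gs_zero_le := by
    have := d.length_gs_zero_le
    by_cases h0 : 0 < d.r <;> simp [h0] at this ⊢ <;> omega
  length_gs_succ_le j := by
    have := d.length_gs_succ_le j
    by_cases hj : j.val + 1 < d.r <;> simp [hj] at this ⊢ <;> omega

def consKeep (hps : ∀ q ∈ ps, q ∈ V) (hlen : ps.length ≤ 1) :
    GapDecomposition V (a :: s) (ps.flatten ++ a :: t) where
  r := d.r + 1
  idx := Fin.cons 0 (Fin.succ ∘ d.idx)
  gs := Fin.cons ps d.gs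
  strictMono_idx :=
    Fin.strictMono_cons.2 ⟨fun _ => Fin.succ_pos _, Fin.strictMono_succ.comp d.strictMono_idx⟩
  mem_vocab := Fin.cases hps d.mem_vocab
  kept_sublist_source := by simpa [List.ofFn_succ] using d.kept_sublist_source.cons_cons a
  kept_sublist_target := by
    simpa [List.ofFn_succ] using
      (d.kept_sublist_target.cons_cons a).trans (List.sublist_append_right _ _)
  eq_target := by
    conv_lhs => rw [d.eq_target]
    simp [List.ofFn_succ]
  length_gs_zero_le := by simpa using hlen
  length_gs_succ_le := by
    refine Fin.cases ?_ (fun j => ?_)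
    · have := d.length_gs_zero_le
      by_cases h0 : 0 < d.r <;> simp [h0, Fin.cons_mk_add_one] at this ⊢ <;> omega
    · have := d.length_gs_succ_le j
      by_cases hj : j.val + 1 < d.r <;> simp [hj, Fin.cons_mk_add_one] at this ⊢ <;> omega

end GapDecomposition

theorem Realizable.nonempty_gapDecomposition {V : Finset (List α)} {s t : List α}
    (h : Realizable V s t) : Nonempty (GapDecomposition V s t) := by
  induction s generalizing t with
  | nil =>
    obtain rfl := eq_nil_of_realizable_nil h
    exact ⟨.nil⟩
  | cons a s ih =>
    obtain ⟨b, p, t', hp, ht', rfl⟩ := Realizable.exists_of_cons h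
    obtain ⟨ps, hps, hlen, rfl⟩ := exists_flatten_eq_of_eq_nil_or_mem hp
    obtain ⟨d⟩ := ih ht'
    cases b
    · simpa using ⟨d.consDelete a hps hlen⟩
    · simpa using ⟨d.consKeep a hps hlen⟩

end

theorem realizable_common_subsequence_decomposition_general {α : Type*}
    (V : Finset (List α)) (s t : List α)
    (h : Realizable V s t) :
    ∃ (r : ℕ) (idx : Fin r → Fin s.length) (gs : Fin (r + 1) → List (List α)),
      StrictMono idx ∧
      (∀ j, ∀ p ∈ gs j, p ∈ V) ∧
      (List.ofFn fun j => s.get (idx j)).Sublist s ∧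
      (List.ofFn fun j => s.get (idx j)).Sublist t ∧
      t = (gs 0).flatten ++
        (List.ofFn fun j : Fin r => s.get (idx j) :: (gs j.succ).flatten).flatten ∧
      (gs 0).length ≤ (if h0 : 0 < r then (idx ⟨0, h0⟩).val + 1 else s.length) ∧
      (∀ j : Fin r, (gs j.succ).length ≤
        if hj : j.val + 1 < r then (idx ⟨j.val + 1, hj⟩).val - (idx j).val
        else s.length - (idx j).val - 1) := by
  obtain ⟨d⟩ := h.nonempty_gapDecomposition
  exact ⟨d.r, d.idx, d.gs, d.strictMono_idx, d.mem_vocab, d.kept_sublist_source,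
    d.kept_sublist_target, d.eq_target, d.length_gs_zero_le, d.length_gs_succ_le⟩

/-- **Kept tokens form a common subsequence, gaps come from the vocabulary.**
If `t` is realizable from `s` with vocabulary `V` of nonempty phrases, then
there are (0-based) positions `idx 0 < idx 1 < ⋯ < idx (r-1)` in `s` and gap
segments `gs 0, …, gs r`, each a concatenation of phrases of `V`, with
`t = gs 0 ++ [s (idx 0)] ++ gs 1 ++ ⋯ ++ [s (idx (r-1))] ++ gs r`;
the kept tokens `[s (idx 0), …, s (idx (r-1))]` form a common subsequence of
`s` and `t`; `gs 0` uses at most `idx 0 + 1` phrases (i.e. at most `i₁` in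
1-based numbering); the gap after the `j`-th kept token uses at most
`idx (j+1) - idx j` phrases, and the final gap at most `n - idx (r-1) - 1`
phrases (so it is empty when the last kept token is the last source token);
when `r = 0`, `t` itself is a concatenation of at most `n` phrases of `V`. -/
theorem realizable_common_subsequence_decomposition {α : Type*}
    (V : Finset (List α)) (hV : ∀ p ∈ V, p ≠ []) (s t : List α)
    (h : Realizable V s t) :
    ∃ (r : ℕ) (idx : Fin r → Fin s.length) (gs : Fin (r + 1) → List (List α)),
      StrictMono idx ∧
      (∀ j, ∀ p ∈ gs j, p ∈ V) ∧
      (List.ofFn fun j => s.get (idx j)).Sublist s ∧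
      (List.ofFn fun j => s.get (idx j)).Sublist t ∧
      t = (gs 0).flatten ++
        (List.ofFn fun j : Fin r => s.get (idx j) :: (gs j.succ).flatten).flatten ∧
      (gs 0).length ≤ (if h0 : 0 < r then (idx ⟨0, h0⟩).val + 1 else s.length) ∧
      (∀ j : Fin r, (gs j.succ).length ≤
        if hj : j.val + 1 < r then (idx ⟨j.val + 1, hj⟩).val - (idx j).val
        else s.length - (idx j).val - 1) :=
  realizable_common_subsequence_decomposition_general V s t h
end

section
/- Fix a token alphabet Σ, a source list s = [s_1,…,s_n] over Σ, and a phrase vocabulary V, a finite set of nonempty lists over Σ. Suppose there exist indices 1 ≤ i_1 < i_2 < ⋯ < i_r ≤ n such that the target list t over Σ decomposes as t = g_0 ++ [s_{i_1}] ++ g_1 ++ [s_{i_2}] ++ ⋯ ++ [s_{i_r}] ++ g_r, where each gap segment g_j is either empty or an element of V, and additionally g_r is empty whenever i_r = n. Then t is realizable from s with vocabulary V. In particular, if the gap segments of t relative to a common subsequence of s and t (as aligned at positions i_1 < ⋯ < i_r) all belong to V and the final gap condition holds, the target can be reconstructed from the source by tagging. -/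
lemma realization_cons {α : Type*} (a : α) (s : List α) (b : Bool) (p : List α)
    (tags : List (Bool × List α)) :
    realization (a :: s) ((b, p) :: tags) =
      p ++ (if b then [a] else []) ++ realization s tags := by
  simp [realization]

lemma realizable_nil {α : Type*} (V : Finset (List α)) (s : List α) :
    Realizable V s [] := by
  refine ⟨s.map fun _ => (false, []), by simp, by simp, ?_⟩
  induction s with
  | nil => rfl
  | cons a s ih => simpa [realization_cons] using ih

lemma realizable_delete {α : Type*} {V : Finset (List α)} {s t : List α} (a : α)
    (h : Realizable V s t) : Realizable V (a :: s) t := by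
  obtain ⟨tags, hl, hm, hr⟩ := h
  exact ⟨(false, []) :: tags, by simp [hl], by simpa using hm,
    by simp [realization_cons, hr]⟩

lemma realizable_phrase {α : Type*} {V : Finset (List α)} {p : List α}
    (hp : p ∈ V) (a : α) (s : List α) : Realizable V (a :: s) p := by
  obtain ⟨tags, hl, hm, hr⟩ := realizable_nil V s
  refine ⟨(false, p) :: tags, by simp [hl], ?_, by simp [realization_cons, hr]⟩
  rw [List.forall_mem_cons]
  exact ⟨Or.inr hp, hm⟩

lemma realizable_keep {α : Type*} {V : Finset (List α)} {s t g : List α}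
    (hg : g = [] ∨ g ∈ V) (a : α) (h : Realizable V s t) :
    Realizable V (a :: s) (g ++ a :: t) := by
  obtain ⟨tags, hl, hm, hr⟩ := h
  refine ⟨(true, g) :: tags, by simp [hl], ?_, by simp [realization_cons, hr]⟩
  rw [List.forall_mem_cons]
  exact ⟨hg, hm⟩

lemma realizable_of_drop {α : Type*} {V : Finset (List α)} {t : List α} :
    ∀ (k : ℕ) (s : List α), Realizable V (s.drop k) t → Realizable V s t := by
  intro k
  induction k with
  | zero => simp
  | succ k ih =>
    intro s h
    cases s with
    | nil => exact h
    | cons a s => exact realizable_delete a (ih s h)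

lemma aux_realizable {α : Type*} (V : Finset (List α)) (hV : ∀ p ∈ V, p ≠ []) :
    ∀ (r : ℕ) (s : List α) (idx : Fin (r + 1) → Fin s.length)
      (hidx : StrictMono idx) (gs : Fin (r + 2) → List α)
      (hgs : ∀ j, gs j = [] ∨ gs j ∈ V)
      (hlast : (idx (Fin.last r)).val = s.length - 1 → gs (Fin.last (r + 1)) = []),
      Realizable V s (gs 0 ++
        (List.ofFn fun j : Fin (r + 1) => s.get (idx j) :: gs j.succ).flatten) := by
  intro r
  induction r with
  | zero =>
    intro s idx hidx gs hgs hlast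
    have hi : (idx 0 : ℕ) < s.length := (idx 0).isLt
    have hdrop : s.drop (idx 0) = s.get (idx 0) :: s.drop ((idx 0 : ℕ) + 1) :=
      (List.drop_eq_getElem_cons hi).trans rfl
    apply realizable_of_drop (idx 0 : ℕ)
    rw [hdrop]
    have h1 : Realizable V (s.drop ((idx 0 : ℕ) + 1)) (gs 1) := by
      rcases hgs 1 with h | h
      · rw [h]; exact realizable_nil V _
      · -- gs 1 ≠ [], so idx 0 ≠ s.length - 1, so the drop is nonempty
        have hne : (idx 0 : ℕ) ≠ s.length - 1 := by
          intro he
          have := hlast (by simpa using he)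
          exact hV _ h (by simpa using this)
        have hlt : (idx 0 : ℕ) + 1 < s.length := by omega
        obtain ⟨b, l, hbl⟩ := List.exists_cons_of_ne_nil
          (by rw [← List.length_pos_iff]; simp; omega :
            s.drop ((idx 0 : ℕ) + 1) ≠ [])
        rw [hbl]; exact realizable_phrase h b l
    have := realizable_keep (hgs 0) (s.get (idx 0)) h1
    simpa using this
  | succ r ih =>
    intro s idx hidx gs hgs hlast
    set i : ℕ := (idx 0 : ℕ) with hi_def
    have hi : i < s.length := (idx 0).isLt
    have hge : ∀ j : Fin (r + 1), i + 1 ≤ (idx j.succ : ℕ) := by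
      intro j
      have : idx 0 < idx j.succ := hidx j.succ_pos
      omega
    have hslen : (s.drop (i + 1)).length = s.length - (i + 1) := by simp
    have hlt' : ∀ j : Fin (r + 1), (idx j.succ : ℕ) - (i + 1) < (s.drop (i + 1)).length := by
      intro j
      have := (idx j.succ).isLt
      have := hge j
      rw [hslen]; omega
    set s' := s.drop (i + 1) with hs'
    set idx' : Fin (r + 1) → Fin s'.length :=
      fun j => ⟨(idx j.succ : ℕ) - (i + 1), hlt' j⟩ with hidx'_def
    have hmono : StrictMono idx' := by
      intro a b hab
      have h1 := hge a
      have h2 := hge b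
      have h3 : (idx a.succ : ℕ) < idx b.succ := hidx (by simpa using hab)
      simp only [hidx'_def, Fin.mk_lt_mk]
      omega
    have hget : ∀ j : Fin (r + 1), s'.get (idx' j) = s.get (idx j.succ) := by
      intro j
      have h1 := hge j
      have h2 := (idx j.succ).isLt
      simp only [List.get_eq_getElem, hs', hidx'_def, List.getElem_drop]
      congr 1
      omega
    have hlast' : (idx' (Fin.last r)).val = s'.length - 1 →
        (fun j : Fin (r + 2) => gs j.succ) (Fin.last (r + 1)) = [] := by
      intro he
      have h1 := hge (Fin.last r)
      have h2 := (idx (Fin.last r).succ).isLt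
      rw [Fin.succ_last] at h1 h2
      simp only [hidx'_def, Fin.succ_last, hslen] at he
      have hx : (idx (Fin.last (r + 1)) : ℕ) = s.length - 1 := by
        simp only [hi_def, Nat.succ_eq_add_one] at h1 h2 he ⊢
        omega
      show gs (Fin.last (r + 1)).succ = []
      rw [Fin.succ_last]
      exact hlast hx
    have H := ih s' idx' hmono (fun j => gs j.succ) (fun j => hgs j.succ) hlast'
    -- rewrite target
    apply realizable_of_drop i
    have hdrop : s.drop i = s.get (idx 0) :: s' := by
      rw [hs']
      exact (List.drop_eq_getElem_cons hi).trans rfl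
    rw [hdrop]
    have hsplit : (List.ofFn fun j : Fin (r + 2) => s.get (idx j) :: gs j.succ).flatten
        = (s.get (idx 0) :: gs 1) ++
          (List.ofFn fun j : Fin (r + 1) => s.get (idx j.succ) :: gs j.succ.succ).flatten := by
      rw [List.ofFn_succ]
      simp [Fin.succ_zero_eq_one]
    rw [hsplit]
    have hT : (gs 0 ++ ((s.get (idx 0) :: gs 1) ++
        (List.ofFn fun j : Fin (r + 1) => s.get (idx j.succ) :: gs j.succ.succ).flatten))
        = gs 0 ++ s.get (idx 0) :: (gs 1 ++
          (List.ofFn fun j : Fin (r + 1) => s.get (idx j.succ) :: gs j.succ.succ).flatten) := by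
      simp
    rw [hT]
    apply realizable_keep (hgs 0)
    have hfun : (List.ofFn fun j : Fin (r + 1) => s'.get (idx' j) :: gs j.succ.succ)
        = List.ofFn fun j : Fin (r + 1) => s.get (idx j.succ) :: gs j.succ.succ := by
      congr 1; funext j; rw [hget j]
    simpa only [hfun, Fin.succ_zero_eq_one] using H

/-- **Sufficient condition for realizability.** Suppose `t` decomposes along
(0-based) source positions `idx 0 < ⋯ < idx (r-1)` as
`t = gs 0 ++ [s (idx 0)] ++ gs 1 ++ ⋯ ++ [s (idx (r-1))] ++ gs r`, where each
gap segment `gs j` is empty or a single phrase of `V`, and the final gap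
`gs r` is empty whenever the last kept position is the last source token
(`i_r = n` in 1-based numbering). Then `t` is realizable from `s` with
vocabulary `V`. -/
theorem realizable_of_gap_decomposition {α : Type*} (V : Finset (List α))
    (hV : ∀ p ∈ V, p ≠ []) (s t : List α)
    (r : ℕ) (hr : 0 < r) (idx : Fin r → Fin s.length) (hidx : StrictMono idx)
    (gs : Fin (r + 1) → List α)
    (hgs : ∀ j, gs j = [] ∨ gs j ∈ V)
    (hlast : (idx ⟨r - 1, Nat.sub_lt hr Nat.one_pos⟩).val = s.length - 1 →
      gs (Fin.last r) = [])
    (ht : t = gs 0 ++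
      (List.ofFn fun j : Fin r => s.get (idx j) :: gs j.succ).flatten) :
    Realizable V s t := by
  subst ht
  obtain ⟨r', rfl⟩ : ∃ r', r = r' + 1 := ⟨r - 1, by omega⟩
  have hl : (⟨r' + 1 - 1, Nat.sub_lt hr Nat.one_pos⟩ : Fin (r' + 1)) = Fin.last r' := by
    ext; simp
  exact aux_realizable V hV r' s idx hidx gs hgs (by rw [← hl]; exact hlast)
end

section
/- Fix a token alphabet Σ, a source list s = [s_1,…,s_{n_s}] over Σ, a target list t = [t_1,…,t_{n_t}] over Σ, and a phrase vocabulary V, a finite set of nonempty lists over Σ with maximum phrase length n_p. Consider the greedy conversion procedure (Algorithm 1): initialize all tags to DELETE and pointers i_s = i_t = 1; while i_t ≤ n_t, fail if i_s > n_s; if s(i_s) = t(i_t), set the tag at i_s to KEEP and increment i_t; otherwise, for j = 1,…,n_p, let p = [t(i_t),…,t(i_t + j − 1)], and if s(i_s) = t(i_t + j) and p ∈ V, set the tag at i_s to KEEP with added phrase p, advance i_t by |p| + 1, and stop the inner search; in all cases then increment i_s; upon termination of the loop return the tag sequence. Then the procedure is sound: whenever it returns a tag sequence x (rather than failing), the realization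 of x applied to s equals t. -/
/-- The inner search of Algorithm 1: at the current source token `a` and
remaining target `t`, look for `j = 1, …, n_p` (here `j+1` with
`j ∈ range np`) such that the phrase `p = t.take (j+1)` (i.e.
`[t(i_t), …, t(i_t + j − 1)]`) is in `V` and the next target token `t[j+1]?`
(i.e. `t(i_t + j)`) equals `a`; return the first such phrase, if any. -/
def findPhrase {α : Type*} [DecidableEq α] (V : Finset (List α)) (np : ℕ)
    (a : α) (t : List α) : Option (List α) :=
  (List.range np).findSome? fun j =>
    if t[j + 1]? = some a ∧ t.take (j + 1) ∈ V then some (t.take (j + 1)) else none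

/-- Algorithm 1 of the paper: greedily convert the pair (source, target) into a
tag sequence. If the target is exhausted, tag all remaining source tokens
`DELETE`; if the source is exhausted first, fail (`none`). Otherwise, if the
current source and target tokens agree, tag `KEEP` and advance the target;
else, if the inner search finds a vocabulary phrase `p` followed in the target
by the current source token, tag `KEEP` with added phrase `p` and advance the
target past `p` and the matched token; otherwise leave the tag as `DELETE`.
In every case advance the source. -/
def greedyConvert {α : Type*} [DecidableEq α] (V : Finset (List α)) (np : ℕ) :
    List α → List α → Option (List (Bool × List α))
  | s, [] => some (s.map fun _ => (false, ([] : List α)))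
  | [], _ :: _ => none
  | a :: s, b :: t =>
    if a = b then
      (greedyConvert V np s t).map fun x => (true, ([] : List α)) :: x
    else
      match findPhrase V np a (b :: t) with
      | some p =>
          (greedyConvert V np s ((b :: t).drop (p.length + 1))).map
            fun x => (true, p) :: x
      | none => (greedyConvert V np s (b :: t)).map fun x => (false, ([] : List α)) :: x
  termination_by s _ => s.length

lemma findPhrase_spec {α : Type*} [DecidableEq α] (V : Finset (List α)) (np : ℕ)
    (a : α) (t : List α) (p : List α) (h : findPhrase V np a t = some p) :
    t = p ++ a :: t.drop (p.length + 1) := by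
  obtain ⟨j, -, hj⟩ := List.exists_of_findSome?_eq_some h
  split at hj
  · rename_i hcond
    obtain ⟨h1, h2⟩ := hcond
    cases hj
    have hlt : j + 1 < t.length := by
      by_contra hge
      simp [List.getElem?_eq_none (le_of_not_gt hge)] at h1
    have hlen : (t.take (j + 1)).length = j + 1 := by
      simp [List.length_take, Nat.min_eq_left (le_of_lt hlt)]
    rw [hlen]
    nth_rewrite 1 [← List.take_append_drop (j + 1) t]
    congr 1
    rw [List.drop_eq_getElem_cons hlt]
    simp [List.getElem?_eq_getElem hlt] at h1
    rw [h1]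
  · exact absurd hj (by simp)

/-- **Soundness of Algorithm 1.** Let `n_p = V.sup List.length` be the maximum
phrase length of the vocabulary `V` (of nonempty phrases). Whenever the greedy
conversion procedure returns a tag sequence `x` for the pair `(s, t)` (rather
than failing), realizing `x` on the source `s` reproduces the target `t`. -/
theorem greedyConvert_sound {α : Type*} [DecidableEq α] (V : Finset (List α))
    (hV : ∀ p ∈ V, p ≠ []) (np : ℕ) (hnp : np = V.sup List.length)
    (s t : List α) (x : List (Bool × List α))
    (hx : greedyConvert V np s t = some x) :
    realization s x = t := by
  induction s, t using greedyConvert.induct V np generalizing x with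
  | case1 s =>
    simp only [greedyConvert, Option.some.injEq] at hx
    subst hx
    induction s with
    | nil => simp [realization]
    | cons a s ih => simpa [realization] using ih
  | case2 b t => simp [greedyConvert] at hx
  | case3 s b t ih =>
    rw [greedyConvert, if_pos rfl, Option.map_eq_some_iff] at hx
    obtain ⟨y, hy, rfl⟩ := hx
    simpa [realization] using ih y hy
  | case4 a s b t hab p hp ih =>
    rw [greedyConvert, if_neg hab, hp, Option.map_eq_some_iff] at hx
    obtain ⟨y, hy, rfl⟩ := hx
    have key := findPhrase_spec V np a (b :: t) p hp
    show (p ++ [a]) ++ realization s y = b :: t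
    rw [ih y hy, key]
    simp
  | case5 a s b t hab hp ih =>
    rw [greedyConvert, if_neg hab, hp, Option.map_eq_some_iff] at hx
    obtain ⟨y, hy, rfl⟩ := hx
    simpa [realization] using ih y hy
end
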